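/- arXiv:2107.01186 — 2 statements merged into one kernel-verified Lean document; each statement's English description precedes it below -/
import Mathlib

section
/- Negating the control of the ZH-gadget swaps its outputs: SWAP * G = G * (X ⊗ₖ I₂), where X := !![0,1;1,0] is the NOT matrix. -/
open Kronecker Matrix

/-- The ZH-gadget `G`, determined on the standard basis by
`G|00⟩ = |00⟩`, `G|01⟩ = |10⟩`, `G|10⟩ = |00⟩`, `G|11⟩ = |01⟩`. -/
def ZHgadget : Matrix (Fin 2 × Fin 2) (Fin 2 × Fin 2) ℂ :=
  Matrix.of fun q p =>
    if p.1 = 0 then (if q = (p.2, 0) then 1 else 0)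
    else (if q = (0, p.2) then 1 else 0)

/-- The SWAP permutation matrix, with `SWAP|ab⟩ = |ba⟩`. -/
def SWAP : Matrix (Fin 2 × Fin 2) (Fin 2 × Fin 2) ℂ :=
  Matrix.of fun q p => if q = (p.2, p.1) then 1 else 0

/-!
All three matrices send basis vectors to basis vectors: a matrix of the form
`(1 : Matrix n n R).submatrix id f` maps `|p⟩` to `|f p⟩`, and such matrices multiply by composing
their basis maps. The identity therefore reduces to the equation
`Prod.swap ∘ zhBasisMap = zhBasisMap ∘ Prod.map (· + 1) id` between maps of a four-element set.
-/

namespace Matrix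

variable {l n R : Type*} [Fintype n] [DecidableEq n] [NonAssocSemiring R]

theorem mul_one_submatrix (M : Matrix l n R) (f : l → n) :
    M * (1 : Matrix n n R).submatrix id f = M.submatrix id f := by
  simpa using mul_submatrix_one (Equiv.refl n) f M

end Matrix

theorem notMatrix_eq_one_submatrix {R : Type*} [Zero R] [One R] :
    (!![0, 1; 1, 0] : Matrix (Fin 2) (Fin 2) R) =
      (1 : Matrix (Fin 2) (Fin 2) R).submatrix id (· + 1) := by
  ext i j
  fin_cases i <;> fin_cases j <;> rfl

theorem notMatrix_kronecker_one {R : Type*} [MulZeroOneClass R] {n : Type*} [DecidableEq n] :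
    (!![0, 1; 1, 0] : Matrix (Fin 2) (Fin 2) R) ⊗ₖ (1 : Matrix n n R) =
      (1 : Matrix (Fin 2 × n) (Fin 2 × n) R).submatrix id (Prod.map (· + 1) id) := by
  rw [notMatrix_eq_one_submatrix, kroneckerMap_submatrix_left, one_kronecker_one, Prod.map_id]

def zhBasisMap (p : Fin 2 × Fin 2) : Fin 2 × Fin 2 :=
  if p.1 = 0 then (p.2, 0) else (0, p.2)

theorem ZHgadget_eq_one_submatrix :
    ZHgadget = (1 : Matrix (Fin 2 × Fin 2) (Fin 2 × Fin 2) ℂ).submatrix id zhBasisMap := by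
  ext q p
  simp only [ZHgadget, zhBasisMap, of_apply, submatrix_apply, id, one_apply]
  split_ifs <;> rfl

theorem SWAP_eq_one_submatrix :
    SWAP = (1 : Matrix (Fin 2 × Fin 2) (Fin 2 × Fin 2) ℂ).submatrix id Prod.swap := by
  ext q p
  simp only [SWAP, of_apply, submatrix_apply, id, one_apply]
  rfl

/-- Negating the control of the ZH-gadget swaps its outputs:
`SWAP * G = G * (X ⊗ₖ I₂)` where `X = !![0,1;1,0]` is the NOT matrix. -/
theorem ZHgadget_not_control :
    SWAP * ZHgadget = ZHgadget * ((!![0, 1; 1, 0] : Matrix (Fin 2) (Fin 2) ℂ) ⊗ₖ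
      (1 : Matrix (Fin 2) (Fin 2) ℂ)) := by
  have swap_comp : Prod.swap ∘ zhBasisMap = zhBasisMap ∘ Prod.map (· + 1) id := by decide
  rw [notMatrix_kronecker_one, mul_one_submatrix, ZHgadget_eq_one_submatrix, mul_one_submatrix,
    SWAP_eq_one_submatrix, submatrix_submatrix, submatrix_submatrix, swap_comp]
end

section
/- Every quantum state admits a state-QMDD representation: for every n : ℕ and every vector v : (Fin n → Fin 2) → ℂ (i.e. v ∈ ℂ^{2ⁿ}), there exists a state-QMDD 𝔇 of height H = n such that ⟦𝔇⟧ = v. -/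
/-!
The complete binary decision tree represents any state. Its non-terminal vertices are the bit
prefixes `p` of length `k ≤ n` of an `(n+1)`-bit string, placed at height `n + 1 - k`. Below
the last level the two edges of `p` lead to `p0` and `p1` with weight `1`; at the last level
both edges go to the terminal and carry the amplitudes `v (p0)` and `v (p1)`. Reading a
bitstring `x` down the tree therefore multiplies ones and finally `v x`. Height `0` is handled
by the overall scalar alone.
-/

/-- A state-QMDD (SQMDD): a tuple `(s, V, u₀, t, H, h, E, ω)` consisting of an overall
scalar `s`, a nonempty finite set of vertices `V` with a root `u₀` and a terminal node
`t` (which coincide only if `V` is a singleton), a height `H`, a height function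
`h : V → {0,...,H}` vanishing exactly on `t`, an edge map `E` sending each non-terminal
vertex to an ordered pair of children of strictly smaller height, such that every
non-root vertex is a child of some vertex, and a weight map `ω` assigning a pair of
complex weights to the out-edges of each non-terminal vertex.  (`E` and `ω` are encoded
as total functions whose values on the terminal node are irrelevant.) -/
structure SQMDD where
  /-- the vertex set -/
  V : Type
  fintypeV : Fintype V
  decEqV : DecidableEq V
  /-- the overall scalar -/
  s : ℂ
  /-- the root -/
  u₀ : V
  /-- the terminal node -/
  t : V
  /-- the height of the SQMDD -/
  H : ℕ
  /-- the height function -/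
  h : V → ℕ
  h_le_H : ∀ v, h v ≤ H
  h_eq_zero_iff : ∀ v, h v = 0 ↔ v = t
  root_eq_terminal_iff : u₀ = t ↔ ∀ v, v = t
  /-- the edges: each non-terminal vertex has an ordered pair of children -/
  E : V → V × V
  child_height_lt : ∀ v, v ≠ t → h (E v).1 < h v ∧ h (E v).2 < h v
  has_parent : ∀ v, v ≠ u₀ → ∃ u, u ≠ t ∧ ((E u).1 = v ∨ (E u).2 = v)
  /-- the weights on the two out-edges of each non-terminal vertex -/
  ω : V → ℂ × ℂ

/-- The value at bitstring `x` of the state represented by the vertex `u` of `D`,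
read at height level `k`: at level `0` only the terminal node contributes (value `1`);
at level `k+1`, a vertex of height exactly `k+1` branches on the first bit, multiplying
by the corresponding edge weight, while a vertex of smaller height is skipped (both
branches lead to it, which graphically is the edge crossing the level).  This is
exactly the recursion `⟦𝔇⟧ = |0⟩ ⊗ ⟦ℓ(𝔇)⟧ + |1⟩ ⊗ ⟦r(𝔇)⟧` of the paper, expressed
pointwise. -/
noncomputable def SQMDD.val (D : SQMDD) : (k : ℕ) → D.V → (Fin k → Fin 2) → ℂ
  | 0, u, _ => letI := D.decEqV; if u = D.t then 1 else 0
  | k + 1, u, x =>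
    if D.h u = k + 1 then
      if x 0 = 0 then (D.ω u).1 * D.val k (D.E u).1 (fun i => x i.succ)
      else (D.ω u).2 * D.val k (D.E u).2 (fun i => x i.succ)
    else D.val k u (fun i => x i.succ)

/-- The interpretation `⟦𝔇⟧ ∈ ℂ^{2^H}` of an SQMDD `𝔇`: the overall scalar times the
value of the root read at the top height level. -/
noncomputable def SQMDD.interp (D : SQMDD) : (Fin D.H → Fin 2) → ℂ :=
  fun x => D.s * D.val D.H D.u₀ x

namespace SQMDD

theorem val_zero_terminal (D : SQMDD) (x : Fin 0 → Fin 2) : D.val 0 D.t x = 1 := by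
  simp [val]

theorem val_succ_of_h_eq (D : SQMDD) {k : ℕ} {u : D.V} (hu : D.h u = k + 1)
    {child : Fin 2 → D.V} {weight : Fin 2 → ℂ} (hE : D.E u = (child 0, child 1))
    (hω : D.ω u = (weight 0, weight 1)) (x : Fin (k + 1) → Fin 2) :
    D.val (k + 1) u x = weight (x 0) * D.val k (child (x 0)) (Fin.tail x) := by
  rw [val, if_pos hu, hE, hω]
  generalize x 0 = b
  fin_cases b <;> rfl

def const (c : ℂ) : SQMDD where
  V := Unit
  fintypeV := inferInstance
  decEqV := inferInstance
  s := c
  u₀ := ()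
  t := ()
  H := 0
  h := fun _ => 0
  h_le_H := fun _ => le_rfl
  h_eq_zero_iff := fun _ => iff_of_true rfl rfl
  root_eq_terminal_iff := iff_of_true rfl fun _ => rfl
  E := fun _ => ((), ())
  child_height_lt := fun _ h => absurd rfl h
  has_parent := fun _ h => absurd rfl h
  ω := fun _ => (0, 0)

theorem interp_const (c : ℂ) (x : Fin 0 → Fin 2) : (const c).interp x = c :=
  (congrArg (c * ·) ((const c).val_zero_terminal x)).trans (mul_one c)

namespace PrefixTree

variable {n : ℕ}

abbrev Vertex (n : ℕ) : Type := Option (Σ k : Fin (n + 1), Fin k → Fin 2)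

def root : Vertex n := some ⟨0, Fin.elim0⟩

def height : Vertex n → ℕ
  | none => 0
  | some ⟨k, _⟩ => n + 1 - k

def child : Vertex n → Fin 2 → Vertex n
  | none, _ => none
  | some ⟨k, p⟩, b =>
    if hk : (k : ℕ) < n then some ⟨⟨k + 1, by omega⟩, Fin.snoc p b⟩ else none

def weight (v : (Fin (n + 1) → Fin 2) → ℂ) : Vertex n → Fin 2 → ℂ
  | none, _ => 0
  | some ⟨k, p⟩, b =>
    if hk : (k : ℕ) < n then 1 else v (Fin.snoc p b ∘ Fin.cast (by have := k.2; omega))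

theorem height_eq_zero_iff (u : Vertex n) : height u = 0 ↔ u = none := by
  rcases u with _ | ⟨k, p⟩
  · simp [height]
  · simp only [height, reduceCtorEq, iff_false]
    have := k.2
    omega

theorem height_child_lt {u : Vertex n} (hu : u ≠ none) (b : Fin 2) :
    height (child u b) < height u := by
  rcases u with _ | ⟨k, p⟩
  · exact absurd rfl hu
  · have := k.2
    by_cases hk : (k : ℕ) < n <;> simp [child, hk, height] <;> omega

theorem exists_child_eq {w : Vertex n} (hw : w ≠ root) :
    ∃ u, u ≠ none ∧ ∃ b, child u b = w := by
  rcases w with _ | ⟨⟨_ | j, hj⟩, p⟩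
  · exact ⟨some ⟨Fin.last n, fun _ => 0⟩, by simp, 0, by simp [child]⟩
  · exact absurd (by rw [Subsingleton.elim p Fin.elim0]; rfl) hw
  · refine ⟨some ⟨⟨j, by omega⟩, Fin.init p⟩, by simp, p (Fin.last j), ?_⟩
    simp [child, show j < n by omega, Fin.snoc_init_self]

def node (x : Fin (n + 1) → Fin 2) (k : ℕ) (hk : k < n + 1) : Vertex n :=
  some ⟨⟨k, hk⟩, Fin.take k hk.le x⟩

theorem root_eq_node (x : Fin (n + 1) → Fin 2) :
    (root : Vertex n) = node x 0 n.succ_pos :=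
  congrArg some (Sigma.ext rfl (heq_of_eq (funext fun i => (Nat.not_lt_zero _ i.2).elim)))

theorem child_node_of_lt (x : Fin (n + 1) → Fin 2) {k : ℕ} (hk : k < n) :
    child (node x k (by omega)) (x ⟨k, by omega⟩) = node x (k + 1) (by omega) := by
  simp [node, child, hk, Fin.take_succ_eq_snoc]

theorem child_node_of_not_lt (x : Fin (n + 1) → Fin 2) {k : ℕ} (hk : k < n + 1)
    (hkn : ¬k < n) (b : Fin 2) : child (node x k hk) b = none := by
  simp [node, child, hkn]

theorem weight_node_of_lt (v : (Fin (n + 1) → Fin 2) → ℂ) (x : Fin (n + 1) → Fin 2)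
    {k : ℕ} (hk : k < n) (b : Fin 2) : weight v (node x k (by omega)) b = 1 := by
  simp [node, weight, hk]

theorem weight_node_of_not_lt (v : (Fin (n + 1) → Fin 2) → ℂ) (x : Fin (n + 1) → Fin 2)
    {k : ℕ} (hk : k < n + 1) (hkn : ¬k < n) : weight v (node x k hk) (x ⟨k, hk⟩) = v x := by
  simp only [node, weight, dif_neg hkn, ← Fin.take_succ_eq_snoc]
  rfl

end PrefixTree

open PrefixTree

def prefixTree {n : ℕ} (v : (Fin (n + 1) → Fin 2) → ℂ) : SQMDD where
  V := Vertex n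
  fintypeV := inferInstance
  decEqV := inferInstance
  s := 1
  u₀ := root
  t := none
  H := n + 1
  h := height
  h_le_H := by rintro (_ | ⟨k, p⟩) <;> simp [height]
  h_eq_zero_iff := height_eq_zero_iff
  root_eq_terminal_iff := iff_of_false (by simp [root]) fun h => by simpa [root] using h root
  E := fun u => (child u 0, child u 1)
  child_height_lt := fun _ hu => ⟨height_child_lt hu 0, height_child_lt hu 1⟩
  has_parent := fun _ hw =>
    let ⟨u, hu, b, hb⟩ := exists_child_eq hw
    ⟨u, hu, Fin.exists_fin_two (p := fun b => child u b = _) |>.mp ⟨b, hb⟩⟩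
  ω := fun u => (weight v u 0, weight v u 1)

theorem val_prefixTree_node_succ {n m k : ℕ} (v : (Fin (n + 1) → Fin 2) → ℂ)
    (x : Fin (n + 1) → Fin 2) (hk : k + m = n) {y : Fin (m + 1) → Fin 2}
    (hy : y 0 = x ⟨k, by omega⟩) :
    (prefixTree v).val (m + 1) (node x k (by omega)) y =
      weight v (node x k (by omega)) (x ⟨k, by omega⟩) *
        (prefixTree v).val m (child (node x k (by omega)) (x ⟨k, by omega⟩)) (Fin.tail y) := by
  rw [← hy]
  exact val_succ_of_h_eq _ (show n + 1 - k = m + 1 by omega) rfl rfl y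

theorem val_prefixTree_node {n : ℕ} (v : (Fin (n + 1) → Fin 2) → ℂ)
    (x : Fin (n + 1) → Fin 2) (m k : ℕ) (hk : k + m = n) (y : Fin (m + 1) → Fin 2)
    (hy : ∀ i : Fin (m + 1), y i = x ⟨k + i, by omega⟩) :
    (prefixTree v).val (m + 1) (node x k (by omega)) y = v x := by
  induction m generalizing k with
  | zero =>
    have hkn : ¬k < n := by omega
    rw [val_prefixTree_node_succ v x hk (by simpa using hy 0), weight_node_of_not_lt v x _ hkn,
      child_node_of_not_lt x _ hkn]
    exact (congrArg (v x * ·) (val_zero_terminal _ _)).trans (mul_one _)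
  | succ m ih =>
    have hkn : k < n := by omega
    rw [val_prefixTree_node_succ v x hk (by simpa using hy 0), weight_node_of_lt v x hkn,
      child_node_of_lt x hkn, one_mul]
    exact ih (k + 1) (by omega) (Fin.tail y) fun i =>
      (hy i.succ).trans (congrArg x (Fin.ext (by simp only [Fin.val_succ]; omega)))

theorem interp_prefixTree {n : ℕ} (v : (Fin (n + 1) → Fin 2) → ℂ)
    (x : Fin (n + 1) → Fin 2) :
    (prefixTree v).interp x = v x := by
  refine (one_mul _).trans ((congrArg (fun u => (prefixTree v).val (n + 1) u x)
    (root_eq_node x)).trans ?_)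
  exact val_prefixTree_node v x n 0 (zero_add n) x fun i =>
    congrArg x (Fin.ext (zero_add _).symm)

end SQMDD

/-- Every quantum state admits a state-QMDD representation: for every `n : ℕ` and every
vector `v ∈ ℂ^{2ⁿ}`, there exists an SQMDD `𝔇` of height `n` with `⟦𝔇⟧ = v`. -/
theorem exists_SQMDD_interp_eq (n : ℕ) (v : (Fin n → Fin 2) → ℂ) :
    ∃ (D : SQMDD) (hH : D.H = n), ∀ x : Fin n → Fin 2,
      D.interp (fun i => x (Fin.cast hH i)) = v x := by
  cases n with
  | zero =>
    exact ⟨.const (v Fin.elim0), rfl, fun x =>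
      (SQMDD.interp_const _ _).trans (congrArg v (Subsingleton.elim _ _))⟩
  | succ n => exact ⟨.prefixTree v, rfl, SQMDD.interp_prefixTree v⟩
end
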